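/- If (A, N) is a quadratic normalisation of class (4,3), then for every letter t ∈ A and every N-normal word s₁|⋯|s_q, one has N(t|s₁|⋯|s_q) = N̄_q ⋯ N̄_2 N̄_1(t|s₁|⋯|s_q). In particular, the leftmost letter of N(t|s₁|⋯|s_q) depends only on t and s₁. -/

import Mathlib

/-- Apply `N` to the length-two factor of `w` at positions `i, i+1` (1-indexed). -/
def applyAt {A : Type*} (N : List A → List A) (i : ℕ) (w : List A) : List A :=
  w.take (i - 1) ++ N ((w.drop (i - 1)).take 2) ++ w.drop (i + 1)

/-- Apply `N` to length-two factors at the given sequence of positions,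
leftmost position in the list applied first. -/
def applySeq {A : Type*} (N : List A → List A) (pos : List ℕ) (w : List A) : List A :=
  pos.foldl (fun v i => applyAt N i v) w

/-- The alternating sequence of positions `s, 3-s, s, ...` of length `k` (with `s ∈ {1,2}`). -/
def altSeq : ℕ → ℕ → List ℕ
  | _, 0 => []
  | s, k + 1 => s :: altSeq (3 - s) k

/-- A quadratic normalisation: a length-preserving map, identity on letters,
satisfying `N(u|v|w) = N(u|N(v)|w)`, for which a word is normal iff all its
length-two factors are, and which is computed by finitely many applications
of its restriction to length-two factors. -/
structure QuadraticNormalisation {A : Type*} (N : List A → List A) : Prop where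
  len : ∀ w : List A, (N w).length = w.length
  letter : ∀ a : A, N [a] = [a]
  mid : ∀ u v w : List A, N (u ++ v ++ w) = N (u ++ N v ++ w)
  normal_iff : ∀ w : List A, N w = w ↔
    ∀ (u v : List A) (a b : A), w = u ++ a :: b :: v → N [a, b] = [a, b]
  reach : ∀ w : List A, ∃ pos : List ℕ, N w = applySeq N pos w

/-- The normalisation is of left-class `m`. -/
def LeftClass {A : Type*} (N : List A → List A) (m : ℕ) : Prop :=
  ∀ w : List A, w.length = 3 → N w = applySeq N (altSeq 1 m) w

/-- The normalisation is of right-class `n`. -/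
def RightClass {A : Type*} (N : List A → List A) (n : ℕ) : Prop :=
  ∀ w : List A, w.length = 3 → N w = applySeq N (altSeq 2 n) w

/-- The normalisation is of class `(m, n)`. -/
def IsClass {A : Type*} (N : List A → List A) (m n : ℕ) : Prop :=
  LeftClass N m ∧ RightClass N n

/-- `e` is an `N`-neutral element: `N(w|e) = N(e|w) = N(w)|e` for every word `w`. -/
def Neutral {A : Type*} (N : List A → List A) (e : A) : Prop :=
  ∀ w : List A, N (w ++ [e]) = N w ++ [e] ∧ N (e :: w) = N w ++ [e]

/-!
Write `a'|b' = N̄(t|s₁)`. The sweep `N̄_q ⋯ N̄_1` of `t|s₁|⋯|s_q` is `a'` followed by the sweep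
of `b'|s₂|⋯|s_q`, which is normal by induction on `q`. The only new length-two factor is `a'|c'`,
where `c'` is the first letter of `N̄(b'|s₂)`. Since `s₁|s₂` is normal, right class 3 gives
`N(t|s₁|s₂) = N̄₂N̄₁(t|s₁|s₂) = a'|c'|b''`, so `a'|c'` is normal. Hence the sweep is normal, and as
every `N̄_i` step preserves `N`, it equals `N(t|s₁|⋯|s_q)`.
-/

section ApplySeq
variable {A : Type*} {N : List A → List A}

lemma applySeq_cons (i : ℕ) (pos : List ℕ) (w : List A) :
    applySeq N (i :: pos) w = applySeq N pos (applyAt N i w) := rfl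

lemma applyAt_one_cons_cons {a b a' b' : A} (h : N [a, b] = [a', b']) (w : List A) :
    applyAt N 1 (a :: b :: w) = a' :: b' :: w := by
  simp [applyAt, h]

lemma applyAt_succ_cons {i : ℕ} (hi : 1 ≤ i) (a : A) (w : List A) :
    applyAt N (i + 1) (a :: w) = a :: applyAt N i w := by
  obtain ⟨j, rfl⟩ : ∃ j, i = j + 1 := ⟨i - 1, by omega⟩
  simp only [applyAt, Nat.add_sub_cancel, List.take_succ_cons, List.drop_succ_cons,
    List.cons_append]

lemma applySeq_range'_succ_cons (k : ℕ) {s : ℕ} (hs : 1 ≤ s) (a : A) (w : List A) :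
    applySeq N (List.range' (s + 1) k) (a :: w) = a :: applySeq N (List.range' s k) w := by
  induction k generalizing s w with
  | zero => rfl
  | succ k ih =>
    rw [List.range'_succ, List.range'_succ, applySeq_cons, applySeq_cons,
      applyAt_succ_cons hs]
    exact ih (by omega) _

lemma applySeq_range'_one_cons_cons {t s₁ a' b' : A} (h : N [t, s₁] = [a', b'])
    (w : List A) :
    applySeq N (List.range' 1 (w.length + 1)) (t :: s₁ :: w) =
      a' :: applySeq N (List.range' 1 w.length) (b' :: w) := by
  rw [List.range'_succ, applySeq_cons, applyAt_one_cons_cons h,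
    applySeq_range'_succ_cons _ le_rfl]

end ApplySeq

namespace QuadraticNormalisation
variable {A : Type*} {N : List A → List A}

lemma idem (hN : QuadraticNormalisation N) (w : List A) : N (N w) = N w := by
  simpa using (hN.mid [] w []).symm

lemma exists_pair (hN : QuadraticNormalisation N) (a b : A) : ∃ x y, N [a, b] = [x, y] :=
  List.length_eq_two.mp (hN.len [a, b])

lemma normal_cons_cons_iff (hN : QuadraticNormalisation N) {a b : A} {w : List A} :
    N (a :: b :: w) = a :: b :: w ↔ N [a, b] = [a, b] ∧ N (b :: w) = b :: w := by
  rw [hN.normal_iff (a :: b :: w), hN.normal_iff (b :: w)]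
  constructor
  · intro h
    refine ⟨h [] w a b rfl, fun u v x y huv => h (a :: u) v x y (by rw [huv]; rfl)⟩
  · rintro ⟨hab, hw⟩ u v x y huv
    cases u with
    | nil =>
      obtain ⟨rfl, rfl, -⟩ : a = x ∧ b = y ∧ w = v := by simpa using huv
      exact hab
    | cons _ u => exact hw u v x y (List.cons.inj huv).2

lemma normalise_applyAt (hN : QuadraticNormalisation N) {i : ℕ} (hi : 1 ≤ i) (w : List A) :
    N (applyAt N i w) = N w := by
  have hdrop : (w.drop (i - 1)).drop 2 = w.drop (i + 1) := by
    rw [List.drop_drop]; congr 1; omega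
  calc N (applyAt N i w)
      = N (w.take (i - 1) ++ (w.drop (i - 1)).take 2 ++ w.drop (i + 1)) := (hN.mid _ _ _).symm
    _ = N w := by rw [List.append_assoc, ← hdrop, List.take_append_drop, List.take_append_drop]

lemma normalise_applySeq (hN : QuadraticNormalisation N) {pos : List ℕ}
    (hpos : ∀ i ∈ pos, 1 ≤ i) (w : List A) : N (applySeq N pos w) = N w := by
  induction pos generalizing w with
  | nil => rfl
  | cons i pos ih =>
    rw [applySeq_cons, ih (fun j hj => hpos j (List.mem_cons_of_mem i hj)),
      hN.normalise_applyAt (hpos i List.mem_cons_self)]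

lemma normalise_applySeq_range' (hN : QuadraticNormalisation N) (w : List A) (k : ℕ) :
    N (applySeq N (List.range' 1 k) w) = N w :=
  hN.normalise_applySeq (fun _ hi => (List.mem_range'_1.mp hi).1) w

lemma normal_pair_of_rightClass_three (hN : QuadraticNormalisation N) (h3 : RightClass N 3)
    {a b c a' b' c' b'' : A} (hbc : N [b, c] = [b, c]) (hab : N [a, b] = [a', b'])
    (hb'c : N [b', c] = [c', b'']) : N [a', c'] = [a', c'] := by
  have h : N [a, b, c] = [a', c', b''] := by
    rw [h3 [a, b, c] rfl]
    show applyAt N 2 (applyAt N 1 (applyAt N 2 [a, b, c])) = _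
    simp [applyAt, hbc, hab, hb'c]
  have hnormal : N [a', c', b''] = [a', c', b''] := by rw [← h, hN.idem]
  exact (hN.normal_cons_cons_iff.mp hnormal).1

lemma normal_applySeq_range'_cons (hN : QuadraticNormalisation N) (h3 : RightClass N 3)
    (t : A) {s : List A} (hs : N s = s) :
    N (applySeq N (List.range' 1 s.length) (t :: s)) =
      applySeq N (List.range' 1 s.length) (t :: s) := by
  induction s generalizing t with
  | nil => exact hN.letter t
  | cons s₁ rest ih =>
    obtain ⟨a', b', hab⟩ := hN.exists_pair t s₁
    rw [List.length_cons, applySeq_range'_one_cons_cons hab]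
    cases rest with
    | nil => exact hN.normal_cons_cons_iff.mpr ⟨by rw [← hab, hN.idem], hN.letter b'⟩
    | cons s₂ rest' =>
      obtain ⟨c', b'', hb'c⟩ := hN.exists_pair b' s₂
      obtain ⟨hs₁s₂, hrest⟩ := hN.normal_cons_cons_iff.mp hs
      have htail := ih b' hrest
      rw [List.length_cons, applySeq_range'_one_cons_cons hb'c] at htail ⊢
      exact hN.normal_cons_cons_iff.mpr
        ⟨hN.normal_pair_of_rightClass_three h3 hs₁s₂ hab hb'c, htail⟩

lemma eq_applySeq_range'_of_normal (hN : QuadraticNormalisation N) (h3 : RightClass N 3)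
    (t : A) {s : List A} (hs : N s = s) :
    N (t :: s) = applySeq N (List.range' 1 s.length) (t :: s) := by
  rw [← hN.normalise_applySeq_range' (t :: s) s.length, hN.normal_applySeq_range'_cons h3 t hs]

lemma head?_eq_of_normal (hN : QuadraticNormalisation N) (h3 : RightClass N 3) (t s₁ : A)
    {w : List A} (hw : N (s₁ :: w) = s₁ :: w) :
    (N (t :: s₁ :: w)).head? = (N [t, s₁]).head? := by
  obtain ⟨a', b', hab⟩ := hN.exists_pair t s₁
  rw [hN.eq_applySeq_range'_of_normal h3 t hw, List.length_cons,
    applySeq_range'_one_cons_cons hab, hab]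
  rfl

end QuadraticNormalisation

/-- if `(A, N)` is a quadratic normalisation of class `(4,3)`, then
for every letter `t` and every `N`-normal word `s`, `N (t :: s)` is computed by
the single left-to-right sweep `N̄_q ⋯ N̄_2 N̄_1`; in particular the leftmost letter
of `N (t :: s)` depends only on `t` and the first letter of `s`. -/
theorem class43_letter_times_normal {A : Type*} (N : List A → List A)
    (hN : QuadraticNormalisation N) (h43 : IsClass N 4 3) :
    (∀ (t : A) (s : List A), N s = s →
      N (t :: s) = applySeq N (List.range' 1 s.length) (t :: s)) ∧
    (∀ (t s₁ : A) (rest rest' : List A),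
      N (s₁ :: rest) = s₁ :: rest → N (s₁ :: rest') = s₁ :: rest' →
      (N (t :: s₁ :: rest)).head? = (N (t :: s₁ :: rest')).head?) := by
  refine ⟨fun t s hs => hN.eq_applySeq_range'_of_normal h43.2 t hs, ?_⟩
  intro t s₁ rest rest' hrest hrest'
  rw [hN.head?_eq_of_normal h43.2 t s₁ hrest, hN.head?_eq_of_normal h43.2 t s₁ hrest']
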